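/- arXiv:math/0410076 — 5 statements merged into one kernel-verified Lean document; each statement's English description precedes it below -/
import Mathlib

section
/- Pythagorean inequality from a saddle-point: Let L₀(P,ζ) = L(P,ζ) − L(P,ζ₀) be the loss relative to a reference act ζ₀ with L(P,ζ₀) finite for all P ∈ Γ, and define the discrepancy D(P,ζ) = L(P,ζ) − inf_η L(P,η). If (P*, ζ*) is a saddle-point of the game (Γ, Z, L₀), then for all P ∈ Γ: D(P, ζ*) + D(P*, ζ₀) ≤ D(P, ζ₀). -/
theorem stmt_9_general {X Z : Type*} [Fintype X] (ℓ : X → Z → ℝ)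
    (Γ : Set (X → ℝ))
    (H : (X → ℝ) → ℝ) (ζ₀ ζstar : Z) (Pstar : X → ℝ)
    (hPstar : Pstar ∈ Γ)
    (hH : ∀ P ∈ Γ, IsGLB (Set.range fun ζ : Z => ∑ x, P x * ℓ x ζ) (H P))
    (hsaddle1 : ∀ ζ : Z,
      (∑ x, Pstar x * ℓ x ζstar) - (∑ x, Pstar x * ℓ x ζ₀)
        ≤ (∑ x, Pstar x * ℓ x ζ) - (∑ x, Pstar x * ℓ x ζ₀))
    (hsaddle2 : ∀ P ∈ Γ,
      (∑ x, P x * ℓ x ζstar) - (∑ x, P x * ℓ x ζ₀)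
        ≤ (∑ x, Pstar x * ℓ x ζstar) - (∑ x, Pstar x * ℓ x ζ₀)) :
    ∀ P ∈ Γ,
      ((∑ x, P x * ℓ x ζstar) - H P) + ((∑ x, Pstar x * ℓ x ζ₀) - H Pstar)
        ≤ (∑ x, P x * ℓ x ζ₀) - H P := by
  intro P hP
  -- The first saddle-point inequality makes ζstar a Bayes act for Pstar.
  have hBayes : ∑ x, Pstar x * ℓ x ζstar ≤ H Pstar :=
    (hH Pstar hPstar).2 <| Set.forall_mem_range.2 fun ζ => by linarith [hsaddle1 ζ]
  -- H P cancels; what remains is the second saddle-point inequality plus `hBayes`.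
  linarith [hsaddle2 P hP]

/-- Pythagorean inequality from a saddle-point of the relative game. -/
theorem stmt_9 {X Z : Type*} [Fintype X] (ℓ : X → Z → ℝ)
    (Γ : Set (X → ℝ)) (hΓ : ∀ P ∈ Γ, (∀ x, 0 ≤ P x) ∧ ∑ x, P x = 1)
    (H : (X → ℝ) → ℝ) (ζ₀ ζstar : Z) (Pstar : X → ℝ)
    (hPstar : Pstar ∈ Γ)
    (hH : ∀ P ∈ Γ, IsGLB (Set.range fun ζ : Z => ∑ x, P x * ℓ x ζ) (H P))
    (hsaddle1 : ∀ ζ : Z,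
      (∑ x, Pstar x * ℓ x ζstar) - (∑ x, Pstar x * ℓ x ζ₀)
        ≤ (∑ x, Pstar x * ℓ x ζ) - (∑ x, Pstar x * ℓ x ζ₀))
    (hsaddle2 : ∀ P ∈ Γ,
      (∑ x, P x * ℓ x ζstar) - (∑ x, P x * ℓ x ζ₀)
        ≤ (∑ x, Pstar x * ℓ x ζstar) - (∑ x, Pstar x * ℓ x ζ₀)) :
    ∀ P ∈ Γ,
      ((∑ x, P x * ℓ x ζstar) - H P) + ((∑ x, Pstar x * ℓ x ζ₀) - H Pstar)
        ≤ (∑ x, P x * ℓ x ζ₀) - H P :=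
  stmt_9_general ℓ Γ H ζ₀ ζstar Pstar hPstar hH hsaddle1 hsaddle2
end

section
/- Converse Pythagorean property: With notation as above and assuming D(P, ζ₀) < ∞ for all P ∈ Γ, if D(P, ζ*) + D(P*, ζ₀) ≤ D(P, ζ₀) holds for all P ∈ Γ (where P* ∈ Γ and ζ* is an act), then (P*, ζ*) is a saddle-point of the relative game (Γ, Z, L₀): ζ* is Bayes against P* and L₀(P,ζ*) ≤ L₀(P*,ζ*) for all P ∈ Γ. -/
theorem stmt_10_general {X Z : Type*} [Fintype X] (ℓ : X → Z → ℝ)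
    (Γ : Set (X → ℝ))
    (H : (X → ℝ) → ℝ) (ζ₀ : Z) (ζstar : Z) (Pstar : X → ℝ)
    (hPstar : Pstar ∈ Γ)
    (hH : ∀ P ∈ Γ, IsGLB (Set.range fun ζ : Z => ∑ x, P x * ℓ x ζ) (H P))
    (hpyth : ∀ P ∈ Γ,
      ((∑ x, P x * ℓ x ζstar) - H P) + ((∑ x, Pstar x * ℓ x ζ₀) - H Pstar)
        ≤ (∑ x, P x * ℓ x ζ₀) - H P) :
    (∑ x, Pstar x * ℓ x ζstar) = H Pstar ∧
    ∀ P ∈ Γ,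
      (∑ x, P x * ℓ x ζstar) - (∑ x, P x * ℓ x ζ₀)
        ≤ (∑ x, Pstar x * ℓ x ζstar) - (∑ x, Pstar x * ℓ x ζ₀) := by
  -- At `P = P*` the Pythagorean inequality says `D(P*, ζ*) ≤ 0`.
  have hBayes : (∑ x, Pstar x * ℓ x ζstar) = H Pstar :=
    le_antisymm (by linarith [hpyth Pstar hPstar]) ((hH Pstar hPstar).1 ⟨ζstar, rfl⟩)
  exact ⟨hBayes, fun P hP => by linarith [hpyth P hP]⟩

/-- Converse Pythagorean property: the Pythagorean inequality on Γ implies that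
(P*, ζ*) is a saddle-point of the relative game. -/
theorem stmt_10 {X Z : Type*} [Fintype X] (ℓ : X → Z → ℝ)
    (Γ : Set (X → ℝ)) (hΓ : ∀ P ∈ Γ, (∀ x, 0 ≤ P x) ∧ ∑ x, P x = 1)
    (H : (X → ℝ) → ℝ) (ζ₀ : Z) (ζstar : Z) (Pstar : X → ℝ)
    (hPstar : Pstar ∈ Γ)
    (hH : ∀ P ∈ Γ, IsGLB (Set.range fun ζ : Z => ∑ x, P x * ℓ x ζ) (H P))
    (hpyth : ∀ P ∈ Γ,
      ((∑ x, P x * ℓ x ζstar) - H P) + ((∑ x, Pstar x * ℓ x ζ₀) - H Pstar)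
        ≤ (∑ x, P x * ℓ x ζ₀) - H P) :
    (∑ x, Pstar x * ℓ x ζstar) = H Pstar ∧
    ∀ P ∈ Γ,
      (∑ x, P x * ℓ x ζstar) - (∑ x, P x * ℓ x ζ₀)
        ≤ (∑ x, Pstar x * ℓ x ζstar) - (∑ x, Pstar x * ℓ x ζ₀) :=
  stmt_10_general ℓ Γ H ζ₀ ζstar Pstar hPstar hH hpyth
end

section
/- Linear act implies saddle-point under mean-value constraints: Let X be finite, t : X → ℝ^k, and Γ_τ = {P : E_P[t(X)] = τ}. Suppose ζ_τ is Bayes against some P_τ ∈ Γ_τ and there exist β₀ ∈ ℝ, β ∈ ℝ^k with L(x, ζ_τ) = β₀ + βᵀt(x) for all x ∈ X. Then: (i) L(P, ζ_τ) = β₀ + βᵀτ for all P ∈ Γ_τ (equalizer rule); (ii) (P_τ, ζ_τ) is a saddle-point of (Γ_τ, Z, L); (iii) H(P_τ) = β₀ + βᵀτ = sup_{P∈Γ_τ} H(P). -/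
/-- A linear Bayes act under mean-value constraints is an equalizer rule, yields a
saddle-point, and the entropy of P_τ equals β₀ + βᵀτ = sup entropy over Γ_τ. -/
theorem stmt_11 {X Z : Type*} [Fintype X] [Nonempty Z] {k : ℕ}
    (ℓ : X → Z → ℝ) (t : X → Fin k → ℝ) (τ : Fin k → ℝ)
    (Ptau : X → ℝ) (ζtau : Z) (β₀ : ℝ) (β : Fin k → ℝ)
    (hpos : ∀ x, 0 ≤ Ptau x) (hsum : ∑ x, Ptau x = 1)
    (hmean : ∀ j, ∑ x, Ptau x * t x j = τ j)
    (hbayes : IsGLB (Set.range fun ζ : Z => ∑ x, Ptau x * ℓ x ζ)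
      (∑ x, Ptau x * ℓ x ζtau))
    (hlin : ∀ x, ℓ x ζtau = β₀ + ∑ j, β j * t x j) :
    (∀ P : X → ℝ, (∀ x, 0 ≤ P x) → ∑ x, P x = 1 → (∀ j, ∑ x, P x * t x j = τ j) →
        ∑ x, P x * ℓ x ζtau = β₀ + ∑ j, β j * τ j) ∧
    ((∀ ζ : Z, ∑ x, Ptau x * ℓ x ζtau ≤ ∑ x, Ptau x * ℓ x ζ) ∧
      (∀ P : X → ℝ, (∀ x, 0 ≤ P x) → ∑ x, P x = 1 → (∀ j, ∑ x, P x * t x j = τ j) →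
        ∑ x, P x * ℓ x ζtau ≤ ∑ x, Ptau x * ℓ x ζtau)) ∧
    ((∑ x, Ptau x * ℓ x ζtau = β₀ + ∑ j, β j * τ j) ∧
      (∀ P : X → ℝ, (∀ x, 0 ≤ P x) → ∑ x, P x = 1 → (∀ j, ∑ x, P x * t x j = τ j) →
        (⨅ ζ : Z, ((∑ x, P x * ℓ x ζ : ℝ) : EReal))
          ≤ ((β₀ + ∑ j, β j * τ j : ℝ) : EReal))) := by

  have key : ∀ P : X → ℝ, ∑ x, P x = 1 → (∀ j, ∑ x, P x * t x j = τ j) →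
      ∑ x, P x * ℓ x ζtau = β₀ + ∑ j, β j * τ j := by
    intro P h1 h2
    calc ∑ x, P x * ℓ x ζtau = ∑ x, (P x * β₀ + ∑ j, β j * (P x * t x j)) := by
          refine Finset.sum_congr rfl fun x _ => ?_
          rw [hlin x, mul_add, Finset.mul_sum]
          congr 1; exact Finset.sum_congr rfl fun j _ => by ring
      _ = (∑ x, P x * β₀) + ∑ x, ∑ j, β j * (P x * t x j) := Finset.sum_add_distrib
      _ = β₀ + ∑ j, β j * τ j := by
          rw [← Finset.sum_mul, h1, one_mul, Finset.sum_comm]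
          congr 1
          refine Finset.sum_congr rfl fun j _ => ?_
          rw [← Finset.mul_sum, h2 j]
  have hPtau := key Ptau hsum hmean
  refine ⟨fun P _ h1 h2 => key P h1 h2, ⟨fun ζ => hbayes.1 ⟨ζ, rfl⟩, ?_⟩, hPtau, ?_⟩
  · intro P _ h1 h2
    rw [key P h1 h2, hPtau]
  · intro P _ h1 h2
    calc (⨅ ζ : Z, ((∑ x, P x * ℓ x ζ : ℝ) : EReal)) ≤ ((∑ x, P x * ℓ x ζtau : ℝ) : EReal) :=
          iInf_le _ ζtau
      _ = _ := by rw [key P h1 h2]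
end

section
/- Finite-case existence of robust Bayes act: Let X be finite, L bounded, and suppose the risk set S = {(L(x₁,ζ),…,L(x_N,ζ)) : ζ ∈ Z} ⊂ ℝ^N is closed, Z being a convex set of randomized acts with L(P,·) affine. Let Γ be a convex set of distributions on X. Then there exists ζ* ∈ Z achieving inf_{ζ∈Z} sup_{P∈Γ} L(P,ζ), and this value equals sup_{P∈Γ̄} inf_{ζ∈Z} L(P,ζ) where Γ̄ is the closure of Γ. -/
/-!
The risk set `S` is compact and convex and `closure Γ` is a convex subset of the simplex. Let `α`
be the sup over `closure Γ` of the Bayes risk. By the finite intersection property in `S`, a single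
act with risk `≤ α` under every prior of `closure Γ` exists as soon as one exists for finitely many
priors `p₁, …, pₙ`. If there were none, the compact convex image of `S` under `f ↦ (pᵢ ⬝ᵥ f)ᵢ`
would avoid the orthant `(-∞, α]ⁿ`; separating the two gives a mixture `∑ qᵢ pᵢ ∈ closure Γ` whose
Bayes risk exceeds `α`, which is absurd. Conversely every act has upper risk `≥ α`, since a risk
that is continuous in the prior has the same sup over `Γ` and over its closure.
-/

open Set

theorem exists_mem_stdSimplex_forall_lt_dotProduct {ι : Type*} [Fintype ι] {T : Set (ι → ℝ)}
    (hTc : Convex ℝ T) (hT : IsCompact T) (hTne : T.Nonempty) {α : ℝ}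
    (hT_out : ∀ d ∈ T, ∃ i, α < d i) :
    ∃ q ∈ stdSimplex ℝ ι, ∀ d ∈ T, α < q ⬝ᵥ d := by
  classical
  set O : Set (ι → ℝ) := Set.pi univ fun _ => Iic α
  have hdisj : Disjoint O T := Set.disjoint_left.2 fun d hdO hdT => by
    obtain ⟨i, hi⟩ := hT_out d hdT
    exact (hdO i (mem_univ i)).not_gt hi
  obtain ⟨φ, u, v, hφO, huv, hφT⟩ := geometric_hahn_banach_closed_compact
    (convex_pi fun _ _ => convex_Iic α) (isClosed_set_pi fun _ _ => isClosed_Iic) hTc hT hdisj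
  set e : ι → ι → ℝ := fun i j => if i = j then 1 else 0
  set w : ι → ℝ := fun i => φ (e i)
  have hφw : ∀ d, φ d = w ⬝ᵥ d := fun d =>
    (φ.toLinearMap.pi_apply_eq_sum_univ d).trans <| Finset.sum_congr rfl fun i _ => mul_comm _ _
  set c : ι → ℝ := fun _ => α
  have hcO : c ∈ O := fun _ _ => le_refl α
  have hφc : φ c = α * ∑ i, w i := by
    rw [hφw, dotProduct, Finset.mul_sum]; exact Finset.sum_congr rfl fun i _ => mul_comm _ _
  -- `φ` is bounded above on the orthant `c - ℝ≥0ⁿ`, so its coefficients are nonnegative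
  have hw : ∀ i, 0 ≤ w i := fun i => by
    by_contra! hwi
    set t := (u - φ c) / w i
    have ht : t ≤ 0 := div_nonpos_of_nonneg_of_nonpos (by linarith [hφO c hcO]) hwi.le
    have hmem : c + t • e i ∈ O := fun j _ => by
      by_cases hij : i = j <;> simp [c, e, hij, ht]
    have := hφO _ hmem
    rw [map_add, map_smul, smul_eq_mul, div_mul_cancel₀ _ hwi.ne] at this
    linarith
  have hQ : 0 < ∑ i, w i := by
    refine (Finset.sum_nonneg fun i _ => hw i).lt_of_ne fun h => ?_
    obtain ⟨d, hd⟩ := hTne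
    have hw0 : w = 0 := funext fun i =>
      (Finset.sum_eq_zero_iff_of_nonneg fun i _ => hw i).1 h.symm i (Finset.mem_univ i)
    have h1 := hφO c hcO
    have h2 := hφT d hd
    simp only [hφw, hw0, zero_dotProduct] at h1 h2
    linarith
  refine ⟨(∑ i, w i)⁻¹ • w, ⟨fun i => mul_nonneg (inv_nonneg.2 hQ.le) (hw i), ?_⟩, fun d hd => ?_⟩
  · simp [← Finset.mul_sum, hQ.ne']
  · rw [smul_dotProduct, smul_eq_mul, ← hφw, lt_inv_mul_iff₀ hQ]
    linarith [hφO c hcO, hφT d hd]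

theorem LinearMap.exists_forall_le_of_forall_exists_le {E F : Type*} [AddCommGroup E]
    [Module ℝ E] [TopologicalSpace E] [AddCommGroup F] [Module ℝ F] (B : F →ₗ[ℝ] E →ₗ[ℝ] ℝ)
    (hB : ∀ p, Continuous (B p)) {S : Set E} {Γ : Set F} (hSc : Convex ℝ S) (hS : IsCompact S)
    (hSne : S.Nonempty) (hΓ : Convex ℝ Γ) {α : ℝ} (h : ∀ p ∈ Γ, ∃ f ∈ S, B p f ≤ α) :
    ∃ f ∈ S, ∀ p ∈ Γ, B p f ≤ α := by
  obtain ⟨f, hfS, hf⟩ := hS.inter_iInter_nonempty (fun p : Γ => {f | B p f ≤ α})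
    (fun p => isClosed_le (hB p) continuous_const) fun u => by
      by_contra hu
      have hS_out : ∀ f ∈ S, ∃ p : u, α < B p f := fun f hf => by
        by_contra! hle
        exact hu ⟨f, hf, mem_iInter₂.2 fun p hp => hle ⟨p, hp⟩⟩
      let A : E →ₗ[ℝ] u → ℝ := LinearMap.pi fun p : u => B p
      obtain ⟨q, ⟨hq0, hq1⟩, hq⟩ := exists_mem_stdSimplex_forall_lt_dotProduct (hSc.linear_image A)
        (hS.image (continuous_pi fun p => hB p)) (hSne.image A)
        (by rintro _ ⟨f, hf, rfl⟩; exact hS_out f hf)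
      -- the `q`-mixture of the `p ∈ u` lies in `Γ`, yet its risk exceeds `α` on all of `S`
      obtain ⟨f, hf, hle⟩ := h (∑ p : u, q p • (p : F))
        (hΓ.sum_mem (fun p _ => hq0 p) hq1 fun p _ => (p : Γ).2)
      have := hq (A f) ⟨f, hf, rfl⟩
      simp only [map_sum, map_smul, LinearMap.sum_apply, LinearMap.smul_apply, smul_eq_mul] at hle
      exact this.not_ge hle
  exact ⟨f, hfS, fun p hp => mem_iInter.1 hf ⟨p, hp⟩⟩

theorem le_ciSup_of_mem_closure {X α : Type*} [TopologicalSpace X] [ConditionallyCompleteLattice α]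
    [TopologicalSpace α] [ClosedIicTopology α] {s : Set X} {φ : X → α} (hφ : Continuous φ)
    (hb : BddAbove (range fun x : s => φ x)) {x : X} (hx : x ∈ closure s) :
    φ x ≤ ⨆ y : s, φ y :=
  closure_minimal (fun y hy => le_ciSup hb ⟨y, hy⟩) (isClosed_Iic.preimage hφ) hx

theorem abs_dotProduct_le_of_mem_stdSimplex {ι : Type*} [Fintype ι] {p f : ι → ℝ}
    (hp : p ∈ stdSimplex ℝ ι) {M : ℝ} (hf : ∀ i, |f i| ≤ M) : |p ⬝ᵥ f| ≤ M :=
  calc |p ⬝ᵥ f| ≤ ∑ i, |p i * f i| := Finset.abs_sum_le_sum_abs _ _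
    _ = ∑ i, p i * |f i| := Finset.sum_congr rfl fun i _ => by rw [abs_mul, abs_of_nonneg (hp.1 i)]
    _ ≤ ∑ i, p i * M := Finset.sum_le_sum fun i _ => mul_le_mul_of_nonneg_left (hf i) (hp.1 i)
    _ = M := by rw [← Finset.sum_mul, hp.2, one_mul]

theorem isCompact_of_isClosed_of_forall_abs_le {ι : Type*} [Fintype ι] {s : Set (ι → ℝ)}
    (hs : IsClosed s) {M : ℝ} (hM : ∀ f ∈ s, ∀ i, |f i| ≤ M) : IsCompact s :=
  Metric.isCompact_of_isClosed_isBounded hs <|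
    (Metric.isBounded_Icc (fun _ => -M) fun _ => M).subset fun f hf =>
      ⟨fun i => (abs_le.1 (hM f hf i)).1, fun i => (abs_le.1 (hM f hf i)).2⟩

section BayesRisk

variable {ι Z : Type*} [Fintype ι] {ℓ : ι → Z → ℝ} {M : ℝ} {Γ : Set (ι → ℝ)}

theorem abs_dotProduct_le_of_mem_closure (hM : ∀ x ζ, |ℓ x ζ| ≤ M) (hΓ : Γ ⊆ stdSimplex ℝ ι)
    {p : ι → ℝ} (hp : p ∈ closure Γ) (ζ : Z) : |p ⬝ᵥ fun x => ℓ x ζ| ≤ M :=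
  abs_dotProduct_le_of_mem_stdSimplex (closure_minimal hΓ (isClosed_stdSimplex ℝ ι) hp) (hM · ζ)

theorem bddBelow_range_dotProduct_of_mem_closure (hM : ∀ x ζ, |ℓ x ζ| ≤ M)
    (hΓ : Γ ⊆ stdSimplex ℝ ι) {p : ι → ℝ} (hp : p ∈ closure Γ) :
    BddBelow (range fun ζ => p ⬝ᵥ fun x => ℓ x ζ) :=
  ⟨-M, by rintro _ ⟨ζ, rfl⟩; exact (abs_le.1 (abs_dotProduct_le_of_mem_closure hM hΓ hp ζ)).1⟩

theorem ciSup_ciInf_closure_le_ciSup_dotProduct (hM : ∀ x ζ, |ℓ x ζ| ≤ M)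
    (hΓ : Γ ⊆ stdSimplex ℝ ι) (hΓne : Γ.Nonempty) (ζ : Z) :
    (⨆ p : closure Γ, ⨅ ζ', (p : ι → ℝ) ⬝ᵥ fun x => ℓ x ζ') ≤
      ⨆ p : Γ, (p : ι → ℝ) ⬝ᵥ fun x => ℓ x ζ :=
  have := hΓne.closure.to_subtype
  ciSup_le fun p => by
    refine (ciInf_le (bddBelow_range_dotProduct_of_mem_closure hM hΓ p.2) ζ).trans <|
      le_ciSup_of_mem_closure (dotProductBilin ℝ ℝ |>.flip _).continuous_of_finiteDimensional
        ⟨M, ?_⟩ p.2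
    rintro _ ⟨q, rfl⟩
    exact (abs_le.1 (abs_dotProduct_le_of_mem_closure hM hΓ (subset_closure q.2) ζ)).2

theorem exists_ciSup_dotProduct_le_ciSup_ciInf [Nonempty Z] (hM : ∀ x ζ, |ℓ x ζ| ≤ M)
    (hSclosed : IsClosed {f : ι → ℝ | ∃ ζ, f = fun x => ℓ x ζ})
    (hSconvex : Convex ℝ {f : ι → ℝ | ∃ ζ, f = fun x => ℓ x ζ})
    (hΓ : Γ ⊆ stdSimplex ℝ ι) (hΓne : Γ.Nonempty) (hΓconv : Convex ℝ Γ) :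
    ∃ ζstar, (⨆ p : Γ, (p : ι → ℝ) ⬝ᵥ fun x => ℓ x ζstar) ≤
      ⨆ p : closure Γ, ⨅ ζ, (p : ι → ℝ) ⬝ᵥ fun x => ℓ x ζ := by
  have := hΓne.to_subtype
  set S := {f : ι → ℝ | ∃ ζ, f = fun x => ℓ x ζ}
  have hS : IsCompact S := isCompact_of_isClosed_of_forall_abs_le hSclosed <| by
    rintro _ ⟨ζ, rfl⟩ x; exact hM x ζ
  have hSne : S.Nonempty := ⟨_, Classical.arbitrary Z, rfl⟩
  set α := ⨆ p : closure Γ, ⨅ ζ, (p : ι → ℝ) ⬝ᵥ fun x => ℓ x ζ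
  have hα : BddAbove (range fun p : closure Γ => ⨅ ζ, (p : ι → ℝ) ⬝ᵥ fun x => ℓ x ζ) := by
    refine ⟨M, ?_⟩
    rintro _ ⟨p, rfl⟩
    obtain ⟨ζ₀⟩ := ‹Nonempty Z›
    exact (ciInf_le (bddBelow_range_dotProduct_of_mem_closure hM hΓ p.2) ζ₀).trans
      (abs_le.1 (abs_dotProduct_le_of_mem_closure hM hΓ p.2 ζ₀)).2
  have hBayes : ∀ p ∈ closure Γ, ∃ f ∈ S, dotProductBilin ℝ ℝ p f ≤ α := fun p hp => by
    obtain ⟨_, ⟨ζ₀, rfl⟩, hmin⟩ := hS.exists_isMinOn hSne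
      (dotProductBilin ℝ ℝ p).continuous_of_finiteDimensional.continuousOn
    exact ⟨_, ⟨ζ₀, rfl⟩, (le_ciInf fun ζ => hmin ⟨ζ, rfl⟩).trans (le_ciSup hα ⟨p, hp⟩)⟩
  obtain ⟨_, ⟨ζstar, rfl⟩, hζstar⟩ := (dotProductBilin ℝ ℝ).exists_forall_le_of_forall_exists_le
    (fun p => LinearMap.continuous_of_finiteDimensional _) hSconvex hS hSne hΓconv.closure hBayes
  exact ⟨ζstar, ciSup_le fun p => hζstar p (subset_closure p.2)⟩

end BayesRisk

/-- Finite-case existence of a robust Bayes act: with bounded loss on a finite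
sample space, closed convex risk set and convex Γ, a minimax act ζ* exists and
the upper value equals the maximin value over the closure of Γ. -/
theorem stmt_18 {N : ℕ} {Z : Type*} [Nonempty Z] (ℓ : Fin N → Z → ℝ)
    (hbdd : ∃ M : ℝ, ∀ x ζ, |ℓ x ζ| ≤ M)
    (hSclosed : IsClosed {f : Fin N → ℝ | ∃ ζ : Z, f = fun x => ℓ x ζ})
    (hSconvex : Convex ℝ {f : Fin N → ℝ | ∃ ζ : Z, f = fun x => ℓ x ζ})
    (Γ : Set (Fin N → ℝ)) (hΓne : Γ.Nonempty) (hΓconv : Convex ℝ Γ)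
    (hΓsub : ∀ p ∈ Γ, (∀ x, 0 ≤ p x) ∧ ∑ x, p x = 1) :
    ∃ ζstar : Z,
      (⨆ p : Γ, ∑ x, (p : Fin N → ℝ) x * ℓ x ζstar)
        = (⨅ ζ : Z, ⨆ p : Γ, ∑ x, (p : Fin N → ℝ) x * ℓ x ζ) ∧
      (⨅ ζ : Z, ⨆ p : Γ, ∑ x, (p : Fin N → ℝ) x * ℓ x ζ)
        = (⨆ p : closure Γ, ⨅ ζ : Z, ∑ x, (p : Fin N → ℝ) x * ℓ x ζ) := by
  obtain ⟨M, hM⟩ := hbdd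
  obtain ⟨ζstar, hupper⟩ :=
    exists_ciSup_dotProduct_le_ciSup_ciInf hM hSclosed hSconvex hΓsub hΓne hΓconv
  have hlower := ciSup_ciInf_closure_le_ciSup_dotProduct hM hΓsub hΓne
  have hmin : (⨅ ζ : Z, ⨆ p : Γ, ∑ x, (p : Fin N → ℝ) x * ℓ x ζ)
      = ⨆ p : Γ, ∑ x, (p : Fin N → ℝ) x * ℓ x ζstar :=
    ciInf_eq_of_forall_ge_of_forall_gt_exists_lt (fun ζ => hupper.trans (hlower ζ))
      fun _ hw => ⟨ζstar, hw⟩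
  exact ⟨ζstar, hmin.symm, hmin.trans (hupper.antisymm (hlower ζstar))⟩
end

section
/- Cauchy property from entropy convergence (key step in Proposition A.1): Let Γ be a set of probability distributions on a countable set, H the Shannon entropy, and H* = sup_{P∈Γ} H(P) < ∞, with Γ convex. If (Qₙ) is a sequence in Γ with H(Qₙ) → H*, then (Qₙ) is Cauchy in total variation; specifically, for any n, m with H* − H(Qₙ) < ε and H* − H(Qₘ) < ε, one has ‖Qₙ − Qₘ‖² ≤ 16ε. -/
/-!
Pointwise, the concavity gap of `negMulLog` at the midpoint of `a, b ≥ 0` dominates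
`(a - b)² / (4 (a + b))`: writing `u = (a - b) / (a + b)`, the gap is `(a + b) / 4` times
`(1 + u) log (1 + u) + (1 - u) log (1 - u) = ∑ₖ u^(2k+2) / ((2k+1)(k+1)) ≥ u²`.
Summing over `x` and applying Cauchy–Schwarz with weights `Qₙ x + Qₘ x` (of total mass 2) gives
`‖Qₙ - Qₘ‖² ≤ 8 (H(M) - (H(Qₙ) + H(Qₘ)) / 2)` for the midpoint `M ∈ Γ`, and `H(M) ≤ H*`.
-/

open Real

theorem hasSum_one_add_mul_log_add_one_sub_mul_log {u : ℝ} (hu : |u| < 1) :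
    HasSum (fun k : ℕ => (u ^ (k + 1)) ^ 2 / ((2 * k + 1) * (k + 1)))
      ((1 + u) * log (1 + u) + (1 - u) * log (1 - u)) := by
  obtain ⟨hu₁, hu₂⟩ := abs_lt.mp hu
  have hsq : |u ^ 2| < 1 := by rw [abs_pow]; exact pow_lt_one₀ (abs_nonneg u) hu two_ne_zero
  have hlog : log (1 - u ^ 2) = log (1 + u) + log (1 - u) := by
    rw [← log_mul (by linarith) (by linarith)]; ring_nf
  have hseries := ((hasSum_log_sub_log_of_abs_lt_one hu).mul_left u).sub
    (hasSum_pow_div_log_of_abs_lt_one hsq)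
  rw [hlog, show u * (log (1 + u) - log (1 - u)) - -(log (1 + u) + log (1 - u)) =
    (1 + u) * log (1 + u) + (1 - u) * log (1 - u) by ring] at hseries
  have hterm : ∀ k : ℕ, (u ^ (k + 1)) ^ 2 / ((2 * k + 1) * (k + 1)) =
      u * (2 * (1 / (2 * k + 1)) * u ^ (2 * k + 1)) - (u ^ 2) ^ (k + 1) / (k + 1) := by
    intro k
    field_simp
    ring
  rwa [← funext hterm] at hseries

theorem sq_le_one_add_mul_log_add_one_sub_mul_log {u : ℝ} (hu : |u| ≤ 1) :
    u ^ 2 ≤ (1 + u) * log (1 + u) + (1 - u) * log (1 - u) := by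
  rcases hu.lt_or_eq with hu | hu
  · simpa using le_hasSum (hasSum_one_add_mul_log_add_one_sub_mul_log hu) 0
      fun k _ => by positivity
  · rcases (abs_eq zero_le_one).mp hu with rfl | rfl <;>
      norm_num <;> linarith [log_two_gt_d9]

theorem sq_sub_div_add_le_four_mul_negMulLog_midpoint_gap {a b : ℝ} (ha : 0 ≤ a) (hb : 0 ≤ b) :
    (a - b) ^ 2 / (a + b) ≤
      4 * (negMulLog ((a + b) / 2) - (negMulLog a + negMulLog b) / 2) := by
  rcases (add_nonneg ha hb).eq_or_lt with hs | hs
  · obtain ⟨rfl, rfl⟩ : a = 0 ∧ b = 0 := ⟨by linarith, by linarith⟩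
    simp
  set u := (a - b) / (a + b) with hu_def
  have hu : |u| ≤ 1 := by
    rw [abs_div, abs_of_pos hs, div_le_one hs, abs_sub_le_iff]
    constructor <;> linarith
  have hlog : ∀ c, 0 ≤ c → c * log (2 * c / (a + b)) = c * (log 2 + log c - log (a + b)) := by
    intro c hc
    rcases hc.eq_or_lt with rfl | hc
    · simp
    · rw [log_div (by positivity) hs.ne', log_mul two_ne_zero hc.ne']
  have h₁ : 1 + u = 2 * a / (a + b) := by rw [hu_def]; field_simp; ring
  have h₂ : 1 - u = 2 * b / (a + b) := by rw [hu_def]; field_simp; ring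
  calc (a - b) ^ 2 / (a + b) = (a + b) * u ^ 2 := by rw [hu_def]; field_simp
    _ ≤ (a + b) * ((1 + u) * log (1 + u) + (1 - u) * log (1 - u)) :=
        mul_le_mul_of_nonneg_left (sq_le_one_add_mul_log_add_one_sub_mul_log hu) hs.le
    _ = 2 * (a * log (2 * a / (a + b)) + b * log (2 * b / (a + b))) := by
        rw [h₁, h₂]; field_simp
    _ = 4 * (negMulLog ((a + b) / 2) - (negMulLog a + negMulLog b) / 2) := by
        rw [hlog a ha, hlog b hb, negMulLog, negMulLog, negMulLog, log_div hs.ne' two_ne_zero]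
        ring

theorem tsum_sq_le_tsum_mul_tsum_of_sq_le_mul {ι : Type*} {r f g : ι → ℝ} (hr : ∀ i, 0 ≤ r i)
    (hf : ∀ i, 0 ≤ f i) (hg : ∀ i, 0 ≤ g i) (hfs : Summable f) (hgs : Summable g)
    (hrfg : ∀ i, r i ^ 2 ≤ f i * g i) :
    (∑' i, r i) ^ 2 ≤ (∑' i, f i) * ∑' i, g i := by
  have hrs : Summable r := (hfs.add hgs).of_nonneg_of_le hr fun i => by
    linarith [two_mul_le_add_of_sq_le_mul (hf i) (hg i) (hrfg i), hr i]
  have hprod : 0 ≤ (∑' i, f i) * ∑' i, g i := mul_nonneg (tsum_nonneg hf) (tsum_nonneg hg)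
  have hle : ∑' i, r i ≤ √((∑' i, f i) * ∑' i, g i) := by
    refine hrs.tsum_le_of_sum_le fun s => (le_abs_self _).trans (abs_le_sqrt ?_)
    calc (∑ i ∈ s, r i) ^ 2 ≤ (∑ i ∈ s, f i) * ∑ i ∈ s, g i :=
          Finset.sum_sq_le_sum_mul_sum_of_sq_le_mul s (fun i _ => hf i) (fun i _ => hg i)
            fun i _ => hrfg i
      _ ≤ (∑' i, f i) * ∑' i, g i :=
          mul_le_mul (hfs.sum_le_tsum s fun i _ => hf i) (hgs.sum_le_tsum s fun i _ => hg i)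
            (Finset.sum_nonneg fun i _ => hg i) (tsum_nonneg hf)
  calc (∑' i, r i) ^ 2 ≤ √((∑' i, f i) * ∑' i, g i) ^ 2 :=
        pow_le_pow_left₀ (tsum_nonneg hr) hle 2
    _ = (∑' i, f i) * ∑' i, g i := sq_sqrt hprod

theorem tsum_abs_sub_sq_le_two_mul_tsum_sq_sub_div_add {X : Type*} {p q : X → ℝ}
    (hp₀ : ∀ x, 0 ≤ p x) (hq₀ : ∀ x, 0 ≤ q x) (hp : Summable p) (hq : Summable q)
    (hp₁ : ∑' x, p x = 1) (hq₁ : ∑' x, q x = 1)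
    (hD : Summable fun x => (p x - q x) ^ 2 / (p x + q x)) :
    (∑' x, |p x - q x|) ^ 2 ≤ 2 * ∑' x, (p x - q x) ^ 2 / (p x + q x) := by
  have hw : ∀ x, 0 ≤ p x + q x := fun x => add_nonneg (hp₀ x) (hq₀ x)
  have hsq : ∀ x, |p x - q x| ^ 2 = (p x + q x) * ((p x - q x) ^ 2 / (p x + q x)) := by
    intro x
    rw [sq_abs, mul_div_cancel_of_imp']
    intro hs
    have hp0 : p x = 0 := by linarith [hp₀ x, hq₀ x]
    have hq0 : q x = 0 := by linarith [hp₀ x, hq₀ x]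
    simp [hp0, hq0]
  have hcs := tsum_sq_le_tsum_mul_tsum_of_sq_le_mul (fun x => abs_nonneg (p x - q x)) hw
    (fun x => div_nonneg (sq_nonneg _) (hw x)) (hp.add hq) hD fun x => (hsq x).le
  rwa [hp.tsum_add hq, hp₁, hq₁, one_add_one_eq_two] at hcs

theorem tsum_abs_sub_sq_le_eight_mul_negMulLog_midpoint_gap {X : Type*} {p q : X → ℝ}
    (hp₀ : ∀ x, 0 ≤ p x) (hq₀ : ∀ x, 0 ≤ q x) (hp : Summable p) (hq : Summable q)
    (hp₁ : ∑' x, p x = 1) (hq₁ : ∑' x, q x = 1)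
    (hHp : Summable fun x => negMulLog (p x)) (hHq : Summable fun x => negMulLog (q x))
    (hHpq : Summable fun x => negMulLog ((p x + q x) / 2)) :
    (∑' x, |p x - q x|) ^ 2 ≤ 8 * (∑' x, negMulLog ((p x + q x) / 2) -
      (∑' x, negMulLog (p x) + ∑' x, negMulLog (q x)) / 2) := by
  set gap := fun x => negMulLog ((p x + q x) / 2) - (negMulLog (p x) + negMulLog (q x)) / 2
  have hgap : Summable gap := hHpq.sub ((hHp.add hHq).div_const 2)
  have hbound : ∀ x, (p x - q x) ^ 2 / (p x + q x) ≤ 4 * gap x := fun x =>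
    sq_sub_div_add_le_four_mul_negMulLog_midpoint_gap (hp₀ x) (hq₀ x)
  have hD : Summable fun x => (p x - q x) ^ 2 / (p x + q x) :=
    (hgap.mul_left 4).of_nonneg_of_le
      (fun x => div_nonneg (sq_nonneg _) (add_nonneg (hp₀ x) (hq₀ x))) hbound
  calc (∑' x, |p x - q x|) ^ 2 ≤ 2 * ∑' x, (p x - q x) ^ 2 / (p x + q x) :=
        tsum_abs_sub_sq_le_two_mul_tsum_sq_sub_div_add hp₀ hq₀ hp hq hp₁ hq₁ hD
    _ ≤ 2 * ∑' x, 4 * gap x :=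
        mul_le_mul_of_nonneg_left (hD.tsum_le_tsum hbound (hgap.mul_left 4)) zero_le_two
    _ = 8 * (∑' x, negMulLog ((p x + q x) / 2) -
          (∑' x, negMulLog (p x) + ∑' x, negMulLog (q x)) / 2) := by
        rw [tsum_mul_left, hHpq.tsum_sub ((hHp.add hHq).div_const 2), tsum_div_const,
          hHp.tsum_add hHq]
        ring

theorem stmt_19_general {X : Type*} (Γ : Set (X → ℝ))
    (hΓ : ∀ P ∈ Γ, (∀ x, 0 ≤ P x) ∧ Summable P ∧ ∑' x, P x = 1)
    (hconv : Convex ℝ Γ)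
    (hsum : ∀ P ∈ Γ, Summable fun x => Real.negMulLog (P x))
    (Hstar : ℝ)
    (hlub : IsLUB ((fun P : X → ℝ => ∑' x, Real.negMulLog (P x)) '' Γ) Hstar)
    (Qn Qm : X → ℝ) (hQn : Qn ∈ Γ) (hQm : Qm ∈ Γ) (ε : ℝ)
    (hn : Hstar - ∑' x, Real.negMulLog (Qn x) < ε)
    (hm : Hstar - ∑' x, Real.negMulLog (Qm x) < ε) :
    (∑' x, |Qn x - Qm x|) ^ 2 ≤ 16 * ε := by
  obtain ⟨hQn₀, hQn_sum, hQn₁⟩ := hΓ Qn hQn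
  obtain ⟨hQm₀, hQm_sum, hQm₁⟩ := hΓ Qm hQm
  have hM : (fun x => (Qn x + Qm x) / 2) ∈ Γ := by
    convert hconv hQn hQm one_half_pos.le one_half_pos.le (add_halves 1) using 1
    ext x
    simp only [Pi.add_apply, Pi.smul_apply, smul_eq_mul]
    ring
  have hHM : ∑' x, negMulLog ((Qn x + Qm x) / 2) ≤ Hstar := hlub.1 ⟨_, hM, rfl⟩
  -- gives `0 ≤ ε`, needed for `8 ε ≤ 16 ε`
  have hHn : ∑' x, negMulLog (Qn x) ≤ Hstar := hlub.1 ⟨Qn, hQn, rfl⟩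
  have hTV := tsum_abs_sub_sq_le_eight_mul_negMulLog_midpoint_gap hQn₀ hQm₀ hQn_sum hQm_sum
    hQn₁ hQm₁ (hsum Qn hQn) (hsum Qm hQm) (hsum _ hM)
  linarith

/-- Cauchy property from entropy convergence: in a convex family Γ of distributions
on a countable set with supremum Shannon entropy H*, distributions whose entropy is
ε-close to H* are at most 4√ε apart in total variation. -/
theorem stmt_19 {X : Type*} [Countable X] (Γ : Set (X → ℝ))
    (hΓ : ∀ P ∈ Γ, (∀ x, 0 ≤ P x) ∧ Summable P ∧ ∑' x, P x = 1)
    (hconv : Convex ℝ Γ)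
    (hsum : ∀ P ∈ Γ, Summable fun x => Real.negMulLog (P x))
    (Hstar : ℝ)
    (hlub : IsLUB ((fun P : X → ℝ => ∑' x, Real.negMulLog (P x)) '' Γ) Hstar)
    (Qn Qm : X → ℝ) (hQn : Qn ∈ Γ) (hQm : Qm ∈ Γ) (ε : ℝ) (hε : 0 < ε)
    (hn : Hstar - ∑' x, Real.negMulLog (Qn x) < ε)
    (hm : Hstar - ∑' x, Real.negMulLog (Qm x) < ε) :
    (∑' x, |Qn x - Qm x|) ^ 2 ≤ 16 * ε :=
  stmt_19_general Γ hΓ hconv hsum Hstar hlub Qn Qm hQn hQm ε hn hm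
end
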